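/- arXiv:2601.07658 — 11 statements merged into one kernel-verified Lean document; each statement's English description precedes it below -/
import Mathlib

section
/- Let M be a real p×q matrix, i ∈ [p], j ∈ [q], and let M' be M with row i deleted, M'' be M with column j deleted, and N be M with both row i and column j deleted. Then the conditions (rank(N) ≤ r−1 and rank(M) ≤ r) hold if and only if (rank(N) ≤ r−1 and at least one of rank(M') ≤ r−1 or rank(M'') ≤ r−1) holds. -/
/-!
Deleting row `i` amounts to applying the coordinate projection `π` to the column space, and a
subspace `U` loses `dim (U ⊓ ker π) ≤ 1` dimensions under `π`; this loss is monotone in `U`.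
Hence rank drops by at most one when a row or column is deleted, which gives `←`. For `→`: the
column space of `M''` lies in that of `M`, so if `rank N < rank M''` then `π` also loses a
dimension on the column space of `M`, i.e. `rank M' < rank M`, and `rank M' ≥ r` forces
`rank M > r`.
-/

open Module Matrix

namespace Submodule

variable {K V W : Type*} [Field K] [AddCommGroup V] [Module K V] [AddCommGroup W] [Module K W]

theorem finrank_eq_finrank_map_add_finrank_inf_ker (f : V →ₗ[K] W) (U : Submodule K V)
    [FiniteDimensional K U] :
    finrank K U = finrank K (U.map f) + finrank K ↥(U ⊓ LinearMap.ker f) := by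
  rw [← (f.domRestrict U).finrank_range_add_finrank_ker, LinearMap.range_domRestrict,
    LinearMap.ker_domRestrict, ← finrank_map_subtype_eq, map_comap_subtype]

theorem finrank_map_lt_of_le {f : V →ₗ[K] W} {U U' : Submodule K V} [FiniteDimensional K U']
    (hUU' : U ≤ U') (hU : finrank K (U.map f) < finrank K U) :
    finrank K (U'.map f) < finrank K U' := by
  have : FiniteDimensional K U := finiteDimensional_of_le hUU'
  have hloss : finrank K ↥(U ⊓ LinearMap.ker f) ≤ finrank K ↥(U' ⊓ LinearMap.ker f) :=
    finrank_mono (inf_le_inf_right _ hUU')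
  rw [finrank_eq_finrank_map_add_finrank_inf_ker f U] at hU
  rw [finrank_eq_finrank_map_add_finrank_inf_ker f U']
  omega

end Submodule

section DeleteCoord

variable (K : Type*) {m : Type*} [Field K] (i : m)

def deleteCoord : (m → K) →ₗ[K] ({k // k ≠ i} → K) := LinearMap.funLeft K K Subtype.val

theorem finrank_inf_ker_deleteCoord_le_one [DecidableEq m] (U : Submodule K (m → K)) :
    finrank K ↥(U ⊓ LinearMap.ker (deleteCoord K i)) ≤ 1 := by
  have hker : LinearMap.ker (deleteCoord K i) ≤ K ∙ Pi.single i 1 := by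
    intro v hv
    refine Submodule.mem_span_singleton.mpr ⟨v i, funext fun k => ?_⟩
    by_cases hk : k = i
    · subst hk; simp
    · simpa [hk, deleteCoord] using (congrFun hv ⟨k, hk⟩).symm
  calc finrank K ↥(U ⊓ LinearMap.ker (deleteCoord K i))
      ≤ finrank K (K ∙ (Pi.single i 1 : m → K)) :=
        Submodule.finrank_mono (inf_le_right.trans hker)
    _ ≤ 1 := by simpa using finrank_span_le_card ({Pi.single i 1} : Set (m → K))

end DeleteCoord

namespace Matrix

variable {K m n : Type*} [Field K] [Fintype n]

theorem rank_deleteRow_eq_finrank_map (A : Matrix m n K) (i : m) :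
    (A.submatrix (Subtype.val : {k // k ≠ i} → m) id).rank =
      finrank K ((LinearMap.range A.mulVecLin).map (deleteCoord K i)) := by
  rw [rank, ← LinearMap.range_comp]
  rfl

theorem range_mulVecLin_submatrix_id_le {l : Type*} [Fintype l] (A : Matrix m n K) (e : l → n) :
    LinearMap.range (A.submatrix id e).mulVecLin ≤ LinearMap.range A.mulVecLin := by
  rw [range_mulVecLin, range_mulVecLin]
  exact Submodule.span_mono (Set.range_comp_subset_range e A.col)

theorem rank_le_rank_deleteRow_add_one [DecidableEq m] (A : Matrix m n K) (i : m) :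
    A.rank ≤ (A.submatrix (Subtype.val : {k // k ≠ i} → m) id).rank + 1 := by
  rw [rank_deleteRow_eq_finrank_map, rank,
    Submodule.finrank_eq_finrank_map_add_finrank_inf_ker (deleteCoord K i)]
  exact Nat.add_le_add_left (finrank_inf_ker_deleteCoord_le_one K i _) _

theorem rank_le_rank_deleteCol_add_one [Fintype m] [DecidableEq n] (A : Matrix m n K) (j : n) :
    A.rank ≤ (A.submatrix id (Subtype.val : {l // l ≠ j} → n)).rank + 1 := by
  simpa [← transpose_submatrix, rank_transpose] using rank_le_rank_deleteRow_add_one Aᵀ j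

theorem rank_deleteRow_lt_rank_of_lt_submatrix {l : Type*} [Fintype l] {A : Matrix m n K} {i : m}
    {e : l → n}
    (h : (A.submatrix (Subtype.val : {k // k ≠ i} → m) e).rank < (A.submatrix id e).rank) :
    (A.submatrix (Subtype.val : {k // k ≠ i} → m) id).rank < A.rank := by
  rw [show A.submatrix Subtype.val e = (A.submatrix id e).submatrix Subtype.val id from rfl,
    rank_deleteRow_eq_finrank_map] at h
  rw [rank_deleteRow_eq_finrank_map]
  exact Submodule.finrank_map_lt_of_le (range_mulVecLin_submatrix_id_le A e) h

end Matrix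

theorem stmt0 {p q r : ℕ} (M : Matrix (Fin p) (Fin q) ℝ) (i : Fin p) (j : Fin q) :
    ((M.submatrix (fun k : {k : Fin p // k ≠ i} => (k : Fin p))
        (fun l : {l : Fin q // l ≠ j} => (l : Fin q))).rank < r ∧ M.rank ≤ r) ↔
    ((M.submatrix (fun k : {k : Fin p // k ≠ i} => (k : Fin p))
        (fun l : {l : Fin q // l ≠ j} => (l : Fin q))).rank < r ∧
      ((M.submatrix (fun k : {k : Fin p // k ≠ i} => (k : Fin p)) id).rank < r ∨
       (M.submatrix id (fun l : {l : Fin q // l ≠ j} => (l : Fin q))).rank < r)) := by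
  refine and_congr_right fun hN => ⟨fun hM => ?_, ?_⟩
  · by_contra! h
    exact (rank_deleteRow_lt_rank_of_lt_submatrix (hN.trans_le h.2)).not_ge (hM.trans h.1)
  · rintro (h | h)
    · exact (rank_le_rank_deleteRow_add_one M i).trans h
    · exact (rank_le_rank_deleteCol_add_one M j).trans h
end

section
/- Let M be a real p×q matrix with rank(M) ≤ r, and let I ⊊ [p], K ⊊ [q] be proper subsets of row and column indices. If the submatrix M_{I,K} (rows I, columns K) has rank at most r−1, then the submatrix M_{I,:} (rows I, all columns) has rank at most r−1 or the submatrix M_{:,K} (all rows, columns K) has rank at most r−1. -/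
open Matrix

theorem stmt1 {p q r : ℕ} (M : Matrix (Fin p) (Fin q) ℝ)
    (I : Finset (Fin p)) (K : Finset (Fin q))
    (hI : I ⊂ Finset.univ) (hK : K ⊂ Finset.univ)
    (hM : M.rank ≤ r)
    (h : (M.submatrix (fun a : {x // x ∈ I} => (a : Fin p))
        (fun b : {x // x ∈ K} => (b : Fin q))).rank < r) :
    (M.submatrix (fun a : {x // x ∈ I} => (a : Fin p)) id).rank < r ∨
    (M.submatrix id (fun b : {x // x ∈ K} => (b : Fin q))).rank < r := by
  by_contra hcon
  push_neg at hcon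
  obtain ⟨h1, h2⟩ := hcon
  set f : {x // x ∈ I} → Fin p := fun a => (a : Fin p) with hf
  set g : {x // x ∈ K} → Fin q := fun b => (b : Fin q) with hg
  set C : Matrix {x // x ∈ I} (Fin p) ℝ :=
    (1 : Matrix (Fin p) (Fin p) ℝ).submatrix f (Equiv.refl (Fin p))
  set E : Matrix (Fin q) {x // x ∈ K} ℝ :=
    (1 : Matrix (Fin q) (Fin q) ℝ).submatrix (Equiv.refl (Fin q)) g
  have hME : M * E = M.submatrix id g := by
    rw [Matrix.mul_submatrix_one]; rfl
  have hCM : C * M = M.submatrix f id := by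
    rw [Matrix.one_submatrix_mul]; rfl
  -- range equality for M * E
  have hle : LinearMap.range (M * E).mulVecLin ≤ LinearMap.range M.mulVecLin := by
    rw [Matrix.mulVecLin_mul]
    exact LinearMap.range_comp_le_range _ _
  have hrank2 : r ≤ (M * E).rank := by rw [hME]; exact h2
  have hdim : Module.finrank ℝ (LinearMap.range M.mulVecLin)
      ≤ Module.finrank ℝ (LinearMap.range (M * E).mulVecLin) := by
    have e1 : Module.finrank ℝ (LinearMap.range M.mulVecLin) = M.rank := rfl
    have e2 : Module.finrank ℝ (LinearMap.range (M * E).mulVecLin) = (M * E).rank := rfl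
    rw [e1, e2]
    exact le_trans hM hrank2
  have key : LinearMap.range (M * E).mulVecLin = LinearMap.range M.mulVecLin :=
    Submodule.eq_of_le_of_finrank_le hle hdim
  -- now compute rank of the corner submatrix
  have hsub : M.submatrix f g = C * (M * E) := by
    rw [← Matrix.mul_assoc, hCM, Matrix.mul_submatrix_one]
    simp [Matrix.submatrix_submatrix]
  have hranges : LinearMap.range (C * (M * E)).mulVecLin
      = LinearMap.range (C * M).mulVecLin := by
    have e1 : (C * (M * E)).mulVecLin = C.mulVecLin ∘ₗ (M * E).mulVecLin :=
      Matrix.mulVecLin_mul _ _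
    have e2 : (C * M).mulVecLin = C.mulVecLin ∘ₗ M.mulVecLin :=
      Matrix.mulVecLin_mul _ _
    rw [e1, e2, LinearMap.range_comp, LinearMap.range_comp, key]
  have hreq : (M.submatrix f g).rank = (M.submatrix f id).rank := by
    rw [hsub, ← hCM, Matrix.rank, Matrix.rank, hranges]
  rw [hreq] at h
  exact absurd h1 (not_le_of_gt h)
end

section
/- A partial matrix with nonnegative observed entries has a completion to a rank-1 matrix with all entries nonnegative if and only if it has a completion to a rank-1 real matrix (not necessarily nonnegative). -/
/-
If M = a bᵀ then |M| = |a| |b|ᵀ is again of rank at most 1, it is nonnegative, and it agrees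
with M wherever M is nonnegative, in particular on the observed entries.
-/

open Matrix

namespace Matrix

variable {m n K : Type*} [Fintype n]

theorem exists_eq_vecMulVec_of_rank_le_one [Field K] (M : Matrix m n K) (hM : M.rank ≤ 1) :
    ∃ (w : m → K) (v : n → K), M = vecMulVec w v := by
  classical
  obtain ⟨⟨w, hw⟩⟩ := (Submodule.finrank_le_one_iff_isPrincipal _).mp hM
  have hcol (j : n) : ∃ c : K, c • w = M.col j := by
    rw [← Submodule.mem_span_singleton, ← hw, ← mulVec_single_one]
    exact LinearMap.mem_range_self M.mulVecLin _
  choose v hv using hcol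
  refine ⟨w, v, ext fun i j => ?_⟩
  rw [vecMulVec_apply, mul_comm, ← smul_eq_mul, ← Pi.smul_apply, hv, col_apply]

theorem rank_map_abs_le_one [Field K] [LinearOrder K] [IsStrictOrderedRing K]
    (M : Matrix m n K) (hM : M.rank ≤ 1) : (M.map abs).rank ≤ 1 := by
  obtain ⟨w, v, rfl⟩ := M.exists_eq_vecMulVec_of_rank_le_one hM
  have : (vecMulVec w v).map abs = vecMulVec (fun i => |w i|) (fun j => |v j|) := by
    ext i j
    simp only [map_apply, vecMulVec_apply, abs_mul]
  rw [this]
  exact rank_vecMulVec_le _ _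

end Matrix

theorem stmt2 {p q : ℕ} (E : Set (Fin p × Fin q)) (f : Fin p → Fin q → ℝ)
    (hf : ∀ e ∈ E, 0 ≤ f e.1 e.2) :
    (∃ M : Matrix (Fin p) (Fin q) ℝ, M.rank ≤ 1 ∧ (∀ i j, 0 ≤ M i j) ∧
        ∀ e ∈ E, M e.1 e.2 = f e.1 e.2) ↔
    (∃ M : Matrix (Fin p) (Fin q) ℝ, M.rank ≤ 1 ∧ ∀ e ∈ E, M e.1 e.2 = f e.1 e.2) := by
  constructor
  · rintro ⟨M, hrank, -, hE⟩
    exact ⟨M, hrank, hE⟩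
  · rintro ⟨M, hrank, hE⟩
    refine ⟨M.map abs, M.rank_map_abs_le_one hrank, fun i j => abs_nonneg _, fun e he => ?_⟩
    rw [map_apply, hE e he, abs_of_nonneg (hf e he)]
end

section
/- Every nonnegative real matrix of rank at most 2 admits a factorization M = A B with A a nonnegative p×2 matrix and B a nonnegative 2×q matrix; i.e., for nonnegative matrices, rank at most 2 implies nonnegative rank at most 2. -/
open Matrix

/-!
Rescale every nonzero column of `M` to coordinate sum `1`. The rescaled columns lie in the column
space, of dimension at most `2`, and in an affine hyperplane missing the origin, hence on a line.
Finitely many points on a line lie on the segment joining the two extreme ones, so every column is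
a nonnegative combination of two columns of `M`, which give the factors `A` and `B`.
-/

open Module Set

section LinearOrderedField

variable {𝕜 E ι : Type*} [Field 𝕜] [LinearOrder 𝕜] [IsStrictOrderedRing 𝕜]
  [AddCommGroup E] [Module 𝕜 E]

theorem Set.Finite.exists_forall_mem_segment {s : Set ι} (hs : s.Finite) (hne : s.Nonempty)
    (t : ι → 𝕜) : ∃ a ∈ s, ∃ b ∈ s, ∀ j ∈ s, t j ∈ segment 𝕜 (t a) (t b) := by
  obtain ⟨a, ha, hmin⟩ := s.exists_min_image t hs hne
  obtain ⟨b, hb, hmax⟩ := s.exists_max_image t hs hne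
  refine ⟨a, ha, b, hb, fun j hj => ?_⟩
  rw [segment_eq_Icc (hmin b hb)]
  exact ⟨hmin j hj, hmax j hj⟩

theorem Set.Finite.exists_forall_mem_segment_of_collinear {s : Set ι} (hs : s.Finite)
    (hne : s.Nonempty) {x : ι → E} (hx : Collinear 𝕜 (x '' s)) :
    ∃ a ∈ s, ∃ b ∈ s, ∀ j ∈ s, x j ∈ segment 𝕜 (x a) (x b) := by
  obtain ⟨j₀, hj₀⟩ := hne
  obtain ⟨v, hv⟩ := (collinear_iff_of_mem (mem_image_of_mem x hj₀)).1 hx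
  choose! t ht using fun j (hj : j ∈ s) => hv (x j) (mem_image_of_mem x hj)
  have hline : ∀ j ∈ s, x j = AffineMap.lineMap (x j₀) (x j₀ + v) (t j) := fun j hj => by
    rw [AffineMap.lineMap_apply_module', add_sub_cancel_left, ht j hj, vadd_eq_add]
  obtain ⟨a, ha, b, hb, hab⟩ := hs.exists_forall_mem_segment ⟨j₀, hj₀⟩ t
  refine ⟨a, ha, b, hb, fun j hj => ?_⟩
  rw [hline j hj, hline a ha, hline b hb, ← image_segment]
  exact mem_image_of_mem _ (hab j hj)

theorem exists_forall_eq_nonneg_combination_of_finrank_span_le_two [Finite ι] [Nonempty ι]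
    {x : ι → E} (hx : finrank 𝕜 (Submodule.span 𝕜 (range x)) ≤ 2) (L : E →ₗ[𝕜] 𝕜)
    (hL : ∀ j, x j ≠ 0 → 0 < L (x j)) :
    ∃ a b, ∀ j, ∃ α β : 𝕜, 0 ≤ α ∧ 0 ≤ β ∧ x j = α • x a + β • x b := by
  set s := {j | 0 < L (x j)}
  have hzero : ∀ j ∉ s, x j = 0 := fun j hj => not_imp_comm.1 (hL j) hj
  rcases s.eq_empty_or_nonempty with hs | ⟨j₀, hj₀⟩
  · refine ⟨Classical.arbitrary ι, Classical.arbitrary ι, fun j => ⟨0, 0, le_rfl, le_rfl, ?_⟩⟩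
    simp [hzero j (hs ▸ notMem_empty j)]
  set V := Submodule.span 𝕜 (range x)
  have : FiniteDimensional 𝕜 V := .span_of_finite 𝕜 (finite_range x)
  set y : ι → E := fun j => (L (x j))⁻¹ • x j
  have hyV : ∀ j, y j ∈ V := fun j => V.smul_mem _ (Submodule.subset_span (mem_range_self j))
  have hLy : ∀ j ∈ s, L (y j) = 1 := fun j hj => by
    simp [y, inv_mul_cancel₀ (ne_of_gt hj)]
  have hspan : vectorSpan 𝕜 (y '' s) ≤ V ⊓ LinearMap.ker L := by
    rw [vectorSpan_def, Submodule.span_le]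
    rintro _ ⟨_, ⟨j, hj, rfl⟩, _, ⟨k, hk, rfl⟩, rfl⟩
    exact ⟨V.sub_mem (hyV j) (hyV k), by simp [hLy j hj, hLy k hk]⟩
  have hlt : vectorSpan 𝕜 (y '' s) < V := by
    refine lt_of_le_of_ne (hspan.trans inf_le_left) fun h => ?_
    have h0 : L (y j₀) = 0 := (hspan (h.symm ▸ hyV j₀)).2
    simp [hLy j₀ hj₀] at h0
  have := Submodule.finiteDimensional_of_le hlt.le
  have hcol : Collinear 𝕜 (y '' s) := by
    rw [collinear_iff_finrank_le_one]
    have := Submodule.finrank_lt_finrank_of_lt hlt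
    omega
  obtain ⟨a, ha, b, hb, hab⟩ := s.toFinite.exists_forall_mem_segment_of_collinear ⟨j₀, hj₀⟩ hcol
  refine ⟨a, b, fun j => ?_⟩
  by_cases hj : j ∈ s
  · obtain ⟨μ, ν, hμ, hν, -, hy⟩ := hab j hj
    refine ⟨L (x j) * μ / L (x a), L (x j) * ν / L (x b),
      div_nonneg (mul_nonneg hj.le hμ) ha.le, div_nonneg (mul_nonneg hj.le hν) hb.le, ?_⟩
    calc x j = L (x j) • y j := (smul_inv_smul₀ (ne_of_gt hj) (x j)).symm
      _ = L (x j) • (μ • y a + ν • y b) := by rw [hy]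
      _ = _ := by simp only [y]; module
  · exact ⟨0, 0, le_rfl, le_rfl, by simp [hzero j hj]⟩

end LinearOrderedField

theorem stmt4 {p q : ℕ} (M : Matrix (Fin p) (Fin q) ℝ)
    (hM : ∀ i j, 0 ≤ M i j) (hr : M.rank ≤ 2) :
    ∃ (A : Matrix (Fin p) (Fin 2) ℝ) (B : Matrix (Fin 2) (Fin q) ℝ),
      (∀ i t, 0 ≤ A i t) ∧ (∀ t j, 0 ≤ B t j) ∧ M = A * B := by
  rcases isEmpty_or_nonempty (Fin q) with _ | _
  · exact ⟨0, 0, fun _ _ => le_rfl, fun _ _ => le_rfl, ext fun _ j => isEmptyElim j⟩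
  let L : (Fin p → ℝ) →ₗ[ℝ] ℝ := ∑ i, LinearMap.proj i
  have hL : ∀ j, Mᵀ j ≠ 0 → 0 < L (Mᵀ j) := fun j hj => by
    simp only [L, LinearMap.sum_apply, LinearMap.proj_apply, transpose_apply]
    refine lt_of_le_of_ne (Finset.sum_nonneg fun i _ => hM i j) fun h => hj (funext fun i => ?_)
    exact (Finset.sum_eq_zero_iff_of_nonneg fun i _ => hM i j).1 h.symm i (Finset.mem_univ i)
  obtain ⟨a, b, hab⟩ := exists_forall_eq_nonneg_combination_of_finrank_span_le_two
    (M.rank_eq_finrank_span_cols ▸ hr) L hL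
  choose α β hα hβ hcol using hab
  refine ⟨of fun i => ![M i a, M i b], of ![α, β], fun i t => ?_, fun t j => ?_, ?_⟩
  · fin_cases t <;> simp [hM]
  · fin_cases t <;> simp [hα, hβ]
  · ext i j
    simpa [mul_apply, Fin.sum_univ_two, mul_comm] using congrFun (hcol j) i
end

section
/- The 3×3 partial matrix with observed entries m_{12}=0, m_{13}=1, m_{21}=1, m_{23}=0, m_{31}=0, m_{32}=1 and missing diagonal entries m_{11}, m_{22}, m_{33} has determinant 1 + m_{11} m_{22} m_{33} for any completion; consequently, every completion of rank at most 2 must have m_{11} m_{22} m_{33} = −1, so no completion of rank at most 2 has all entries nonnegative, even though rank-2 completions exist (e.g. m_{11}=m_{22}=m_{33}=−1). -/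
open Matrix

lemma det_aux (x y z : ℝ) : (!![x, 0, 1; 1, y, 0; 0, 1, z]).det = 1 + x * y * z := by
  simp [Matrix.det_fin_three]; ring

lemma rank_aux {A : Matrix (Fin 3) (Fin 3) ℝ} (h : A.rank ≤ 2) : A.det = 0 := by
  by_contra hd
  have hu : IsUnit A := (Matrix.isUnit_iff_isUnit_det A).mpr (isUnit_iff_ne_zero.mpr hd)
  have := Matrix.rank_of_isUnit A hu
  rw [this] at h
  simp at h

lemma rank_aux2 {A : Matrix (Fin 3) (Fin 3) ℝ} (h : A.det = 0) : A.rank ≤ 2 := by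
  by_contra hc
  push_neg at hc
  have hle : A.rank ≤ 3 := by simpa using A.rank_le_card_width
  have h3 : A.rank = 3 := le_antisymm hle hc
  have htop : LinearMap.range A.mulVecLin = ⊤ := by
    apply Submodule.eq_top_of_finrank_eq
    rw [← Matrix.rank, h3]
    simp [Module.finrank_pi]
  have hsurj : Function.Surjective (A.mulVec ·) := by
    intro v
    obtain ⟨w, hw⟩ := (LinearMap.range_eq_top.mp htop) v
    exact ⟨w, hw⟩
  have hu : IsUnit A := Matrix.mulVec_surjective_iff_isUnit.mp hsurj
  have := ((Matrix.isUnit_iff_isUnit_det A).mp hu)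
  rw [h] at this
  simp at this

theorem stmt6 :
    (∀ x y z : ℝ, (!![x, 0, 1; 1, y, 0; 0, 1, z]).det = 1 + x * y * z) ∧
    (∀ x y z : ℝ, (!![x, 0, 1; 1, y, 0; 0, 1, z]).rank ≤ 2 → x * y * z = -1) ∧
    (∀ x y z : ℝ, (!![x, 0, 1; 1, y, 0; 0, 1, z]).rank ≤ 2 →
      ¬(0 ≤ x ∧ 0 ≤ y ∧ 0 ≤ z)) ∧
    (!![(-1 : ℝ), 0, 1; 1, -1, 0; 0, 1, -1]).rank ≤ 2 := by
  have key : ∀ x y z : ℝ, (!![x, 0, 1; 1, y, 0; 0, 1, z]).rank ≤ 2 → x * y * z = -1 := by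
    intro x y z h
    have := rank_aux h
    rw [det_aux] at this
    linarith
  refine ⟨fun x y z => det_aux x y z, key, ?_, ?_⟩
  · intro x y z h ⟨hx, hy, hz⟩
    have := key x y z h
    nlinarith [mul_nonneg (mul_nonneg hx hy) hz]
  · apply rank_aux2
    rw [det_aux]
    norm_num
end

section
/- Let M_E be a partial nonnegative p×q matrix whose row i contains at most one observed entry (i,j), and assume that whenever m_{ij} ≠ 0 there exists some row k ≠ i with m_{kj} observed and nonzero. If the partial matrix obtained by deleting row i admits a completion of nonnegative rank at most r, then M_E admits a completion of nonnegative rank at most r. -/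
/-!
Factor the completion of the smaller partial matrix as `N = A * B` with `A, B ≥ 0`. Row `i`
contains at most the single entry `m_ij`; give it the row `c • N_k` of the completion, where
`c = m_ij / m_kj ≥ 0` for a row `k` with `m_kj ≠ 0`, or `c = 0` when `m_ij` is zero or unobserved.
Such a row is a nonnegative combination of the rows of `N`, so adding the row `c • A_k` to `A`
gives a nonnegative factorization of the enlarged matrix through the same `B`.
-/

open Matrix

def HasNonnegRankLE {m n : Type*} (M : Matrix m n ℝ) (r : ℕ) : Prop :=
  ∃ (A : Matrix m (Fin r) ℝ) (B : Matrix (Fin r) n ℝ),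
    (∀ a b, 0 ≤ A a b) ∧ (∀ a b, 0 ≤ B a b) ∧ M = A * B

lemma HasNonnegRankLE.exists_insertRow_vecMul {ι n : Type*} [Fintype ι] [DecidableEq ι]
    {i : ι} {r : ℕ} {N : Matrix {k // k ≠ i} n ℝ} (hN : HasNonnegRankLE N r)
    (c : {k // k ≠ i} → ℝ) (hc : 0 ≤ c) :
    ∃ M : Matrix ι n ℝ, HasNonnegRankLE M r ∧
      (∀ x (hx : x ≠ i), M x = N ⟨x, hx⟩) ∧ M i = c ᵥ* N := by
  obtain ⟨A, B, hA, hB, rfl⟩ := hN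
  let A' : Matrix ι (Fin r) ℝ := fun x => if hx : x = i then c ᵥ* A else A ⟨x, hx⟩
  refine ⟨A' * B, ⟨A', B, fun x b => ?_, hB, rfl⟩, fun x hx => ?_, ?_⟩
  · by_cases hx : x = i
    · simpa [A', hx, vecMul, dotProduct] using
        Finset.sum_nonneg fun k _ => mul_nonneg (hc k) (hA k b)
    · simpa [A', hx] using hA _ b
  · rw [mul_apply_eq_vecMul, mul_apply_eq_vecMul]
    simp [A', hx]
  · rw [mul_apply_eq_vecMul, ← vecMul_vecMul]
    simp [A']

theorem stmt7 {p q r : ℕ} (E : Set (Fin p × Fin q)) (f : Fin p → Fin q → ℝ)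
    (hf : ∀ e ∈ E, 0 ≤ f e.1 e.2) (i : Fin p) (j : Fin q)
    (hrow : ∀ l : Fin q, (i, l) ∈ E → l = j)
    (hcol : (i, j) ∈ E → f i j ≠ 0 → ∃ k : Fin p, k ≠ i ∧ (k, j) ∈ E ∧ f k j ≠ 0)
    (hdel : ∃ N : Matrix {k : Fin p // k ≠ i} (Fin q) ℝ,
      (∃ (A : Matrix {k : Fin p // k ≠ i} (Fin r) ℝ) (B : Matrix (Fin r) (Fin q) ℝ),
        (∀ a b, 0 ≤ A a b) ∧ (∀ a b, 0 ≤ B a b) ∧ N = A * B) ∧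
      ∀ (k : Fin p) (h : k ≠ i) (l : Fin q), (k, l) ∈ E → N ⟨k, h⟩ l = f k l) :
    ∃ M : Matrix (Fin p) (Fin q) ℝ,
      (∃ (A : Matrix (Fin p) (Fin r) ℝ) (B : Matrix (Fin r) (Fin q) ℝ),
        (∀ a b, 0 ≤ A a b) ∧ (∀ a b, 0 ≤ B a b) ∧ M = A * B) ∧
      ∀ e ∈ E, M e.1 e.2 = f e.1 e.2 := by
  obtain ⟨N, hN, hNE⟩ := hdel
  obtain ⟨c, hc, hcj⟩ : ∃ c : {k // k ≠ i} → ℝ, 0 ≤ c ∧ ((i, j) ∈ E → (c ᵥ* N) j = f i j) := by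
    by_cases hij : (i, j) ∈ E ∧ f i j ≠ 0
    · obtain ⟨k, hk, hkE, hkj⟩ := hcol hij.1 hij.2
      refine ⟨Pi.single ⟨k, hk⟩ (f i j / f k j), ?_, fun _ => ?_⟩
      · exact Pi.single_nonneg.2 (div_nonneg (hf _ hij.1) (hf _ hkE))
      · rw [single_vecMul, Pi.smul_apply, row_apply, hNE k hk j hkE, smul_eq_mul,
          div_mul_cancel₀ _ hkj]
    · refine ⟨0, le_rfl, fun hE => ?_⟩
      rw [zero_vecMul, Pi.zero_apply, not_not.1 (not_and.1 hij hE)]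
  obtain ⟨M, hM, hMN, hMi⟩ := HasNonnegRankLE.exists_insertRow_vecMul hN c hc
  refine ⟨M, hM, fun ⟨x, l⟩ hxl => ?_⟩
  by_cases hx : x = i
  · subst hx
    obtain rfl := hrow l hxl
    rw [hMi, hcj hxl]
  · rw [hMN x hx, hNE x hx l hxl]
end

section
/- Let E = ([p]×[q]) \ {(i,j)} be the pattern missing a single entry. A partial real matrix M_E is completable to a p×q matrix of rank at most r if and only if (a) the submatrix missing row i (all observed) or the submatrix missing column j has rank at most r−1, or (b) the submatrices M_{î,:}, M_{:,ĵ}, and M_{î,ĵ} all have rank exactly r. -/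
/-!
Rank is the dimension of the row space. Restricting rows to the columns `l ≠ j` is a linear
map, and a linear map cannot increase the dimension of `U / W` for `W ≤ U`; applied to the row
spans of `M_{î,:} ≤ M` this gives
`rank M_{:,ĵ} - rank M_{î,ĵ} ≤ rank M - rank M_{î,:}`, so a completion of rank `≤ r` whose
submatrices `M_{î,:}`, `M_{:,ĵ}` have rank `r` forces `rank M_{î,ĵ} = r`.

Conversely, adding a row or a column raises the rank by at most one, which handles (a). Under
(b), `rank M_{:,ĵ} = rank M_{î,ĵ}` says that row `i` truncated to the columns `l ≠ j` lies in the
truncated span of the other rows; lifting it to an element of the span of the full other rows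
chooses the missing entry, and the resulting row `i` adds nothing to the rank `r` of `M_{î,:}`.
-/

open Matrix

open Module Submodule

theorem Submodule.finrank_map_add_finrank_le_of_le {K V V' : Type*} [DivisionRing K]
    [AddCommGroup V] [Module K V] [AddCommGroup V'] [Module K V'] [FiniteDimensional K V]
    (f : V →ₗ[K] V') {W U : Submodule K V} (hWU : W ≤ U) :
    finrank K (U.map f) + finrank K W ≤ finrank K U + finrank K (W.map f) := by
  obtain ⟨C, hC⟩ := W.exists_isCompl
  have hsup : W ⊔ C ⊓ U = U := by rw [← sup_inf_assoc_of_le C hWU, hC.sup_eq_top, top_inf_eq]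
  have hinf : W ⊓ (C ⊓ U) = ⊥ := hC.disjoint.mono_right inf_le_left |>.eq_bot
  have hdim := Submodule.finrank_sup_add_finrank_inf_eq W (C ⊓ U)
  rw [hsup, hinf, finrank_bot] at hdim
  have hmap : finrank K (U.map f) ≤ finrank K (W.map f) + finrank K ((C ⊓ U).map f) := by
    conv_lhs => rw [← hsup, Submodule.map_sup]
    exact Submodule.finrank_add_le_finrank_add_finrank _ _
  have := Submodule.finrank_map_le f (C ⊓ U)
  omega

namespace Matrix

variable {K m n m' n' : Type*}

theorem range_row_eq_insert_range_row_submatrix_ne (N : Matrix m n K) (i : m) :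
    Set.range N.row =
      insert (N i) (Set.range (N.submatrix (fun k : {k // k ≠ i} => (k : m)) id).row) := by
  ext v
  constructor
  · rintro ⟨k, rfl⟩
    rcases eq_or_ne k i with rfl | hk
    · exact Set.mem_insert _ _
    · exact Set.mem_insert_of_mem _ ⟨⟨k, hk⟩, rfl⟩
  · rintro (rfl | ⟨k, rfl⟩)
    exacts [⟨i, rfl⟩, ⟨k, rfl⟩]

variable [Field K]

theorem span_range_row_submatrix (N : Matrix m n K) (e : m' → m) (g : n' → n) :
    span K (Set.range (N.submatrix e g).row) =
      (span K (Set.range (N.submatrix e id).row)).map (LinearMap.funLeft K K g) := by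
  rw [Submodule.map_span, ← Set.range_comp]
  rfl

variable [Fintype m] [Fintype n]

theorem rank_submatrix_id_add_rank_submatrix_le [Fintype m'] [Fintype n']
    (N : Matrix m n K) (e : m' → m) (g : n' → n) :
    (N.submatrix id g).rank + (N.submatrix e id).rank ≤ N.rank + (N.submatrix e g).rank := by
  simp only [rank_eq_finrank_span_row]
  rw [span_range_row_submatrix N id g, span_range_row_submatrix N e g, submatrix_id_id]
  exact finrank_map_add_finrank_le_of_le _ (span_mono (Set.range_comp_subset_range e N))

theorem rank_le_rank_submatrix_ne_add_one (N : Matrix m n K) (i : m) :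
    N.rank ≤ (N.submatrix (fun k : {k // k ≠ i} => (k : m)) id).rank + 1 := by
  simp only [rank_eq_finrank_span_row]
  rw [range_row_eq_insert_range_row_submatrix_ne N i, span_insert]
  refine (finrank_add_le_finrank_add_finrank _ _).trans ?_
  have : finrank K (K ∙ N i) ≤ 1 := by
    simpa using finrank_span_le_card (R := K) ({N i} : Set (n → K))
  omega

theorem rank_le_rank_submatrix_col_ne_add_one [DecidableEq n] (N : Matrix m n K) (j : n) :
    N.rank ≤ (N.submatrix id (fun l : {l // l ≠ j} => (l : n))).rank + 1 := by
  have := rank_le_rank_submatrix_ne_add_one Nᵀ j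
  rwa [rank_transpose, ← transpose_submatrix, rank_transpose] at this

theorem rank_submatrix_ne_eq_rank_iff (N : Matrix m n K) (i : m) :
    (N.submatrix (fun k : {k // k ≠ i} => (k : m)) id).rank = N.rank ↔
      N i ∈ span K (Set.range (N.submatrix (fun k : {k // k ≠ i} => (k : m)) id).row) := by
  simp only [rank_eq_finrank_span_row]
  rw [range_row_eq_insert_range_row_submatrix_ne N i]
  constructor
  · intro h
    have := eq_of_le_of_finrank_eq (span_mono (Set.subset_insert (N i) _)) h
    exact this ▸ subset_span (Set.mem_insert _ _)
  · intro h
    rw [span_insert_eq_span h]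

theorem exists_rank_updateRow_eq_of_rank_submatrix_eq [DecidableEq m] [DecidableEq n]
    (N : Matrix m n K) (i : m) (j : n)
    (h : (N.submatrix (fun k : {k // k ≠ i} => (k : m)) (fun l : {l // l ≠ j} => (l : n))).rank =
      (N.submatrix id (fun l : {l // l ≠ j} => (l : n))).rank) :
    ∃ w : n → K, (∀ l ≠ j, w l = N i l) ∧
      (N.updateRow i w).rank = (N.submatrix (fun k : {k // k ≠ i} => (k : m)) id).rank := by
  have hmem :=
    (rank_submatrix_ne_eq_rank_iff (N.submatrix id (fun l : {l // l ≠ j} => (l : n))) i).mp h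
  rw [submatrix_submatrix, Function.id_comp, Function.comp_id,
    span_range_row_submatrix] at hmem
  obtain ⟨w, hw, hwi⟩ := mem_map.mp hmem
  refine ⟨w, fun l hl => congrFun hwi ⟨l, hl⟩, ?_⟩
  have hdel : (N.updateRow i w).submatrix (fun k : {k // k ≠ i} => (k : m)) id =
      N.submatrix (fun k : {k // k ≠ i} => (k : m)) id := by
    ext k l
    exact congrFun (updateRow_ne k.2) l
  rw [← hdel, eq_comm, rank_submatrix_ne_eq_rank_iff, hdel, updateRow_self]
  exact hw

end Matrix

theorem stmt11 {p q r : ℕ} (f : Fin p → Fin q → ℝ) (i : Fin p) (j : Fin q) :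
    (∃ M : Matrix (Fin p) (Fin q) ℝ, M.rank ≤ r ∧
        ∀ k l, (k, l) ≠ (i, j) → M k l = f k l) ↔
    (((Matrix.of f).submatrix (fun k : {k : Fin p // k ≠ i} => (k : Fin p)) id).rank < r ∨
     ((Matrix.of f).submatrix id (fun l : {l : Fin q // l ≠ j} => (l : Fin q))).rank < r) ∨
    (((Matrix.of f).submatrix (fun k : {k : Fin p // k ≠ i} => (k : Fin p)) id).rank = r ∧
     ((Matrix.of f).submatrix id (fun l : {l : Fin q // l ≠ j} => (l : Fin q))).rank = r ∧
     ((Matrix.of f).submatrix (fun k : {k : Fin p // k ≠ i} => (k : Fin p))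
        (fun l : {l : Fin q // l ≠ j} => (l : Fin q))).rank = r) := by
  set rowDel := fun k : {k : Fin p // k ≠ i} => (k : Fin p)
  set colDel := fun l : {l : Fin q // l ≠ j} => (l : Fin q)
  constructor
  · rintro ⟨M, hMr, hM⟩
    have hA : M.submatrix rowDel id = (of f).submatrix rowDel id := by
      ext k l; exact hM k l (by simp [k.2])
    have hB : M.submatrix id colDel = (of f).submatrix id colDel := by
      ext k l; exact hM k l (by simp [l.2])
    have hC : M.submatrix rowDel colDel = (of f).submatrix rowDel colDel :=
      congrArg (·.submatrix id colDel) hA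
    have key := rank_submatrix_id_add_rank_submatrix_le M rowDel colDel
    have hAM := rank_submatrix_le M rowDel id
    have hBM := rank_submatrix_le M id colDel
    have hCA : ((of f).submatrix rowDel colDel).rank ≤ ((of f).submatrix rowDel id).rank :=
      rank_submatrix_le ((of f).submatrix rowDel id) id colDel
    rw [hA, hB, hC] at key
    rw [hA] at hAM
    rw [hB] at hBM
    omega
  · rintro ((hA | hB) | ⟨hA, hB, hC⟩)
    · exact ⟨of f, (rank_le_rank_submatrix_ne_add_one (of f) i).trans hA, fun _ _ _ => rfl⟩
    · exact ⟨of f, (rank_le_rank_submatrix_col_ne_add_one (of f) j).trans hB, fun _ _ _ => rfl⟩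
    · obtain ⟨w, hw, hrank⟩ :=
        exists_rank_updateRow_eq_of_rank_submatrix_eq (of f) i j (hC.trans hB.symm)
      refine ⟨(of f).updateRow i w, (hrank.trans hA).le, fun k l hkl => ?_⟩
      rcases eq_or_ne k i with rfl | hk
      · rw [updateRow_self, hw l (by simpa using hkl)]
        rfl
      · rw [updateRow_ne hk]
        rfl
end

section
/- Let E = ([p]×[q]) \ {(i,j)}. A partial real matrix M_E has infinitely many completions of rank at most r if and only if the submatrix M_{î,:} (row i deleted) or M_{:,ĵ} (column j deleted) has rank at most r−1; moreover, in that case every real value of the missing entry yields a completion of rank at most r. -/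
/-!
Deleting a column (or a row) lowers the rank by at most one, so if `M_{î,:}` or `M_{:,ĵ}` has rank
`< r`, every value of the missing entry gives rank `≤ r`. Conversely, if both have rank `≥ r`, a
completion `M` of rank `≤ r` loses no rank when its row `i`, or its column `j`, is deleted, so
`M_{:,j} = C e` and `M_{i,:} = cᵀ C` on the common core `C = M_{î,ĵ}`, and the missing entry is
forced to be `cᵀ C e`.
-/

open Matrix

namespace Matrix

variable {α K m n : Type*}

abbrev deleteRow (M : Matrix m n α) (i : m) : Matrix {k // k ≠ i} n α := M.submatrix (↑) id

abbrev deleteCol (M : Matrix m n α) (j : n) : Matrix m {l // l ≠ j} α := M.submatrix id (↑)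

section EqOff

variable {M M' : Matrix m n α} {i : m} {j : n}

theorem deleteRow_eq_of_eq_off (h : ∀ k l, (k, l) ≠ (i, j) → M k l = M' k l) :
    M.deleteRow i = M'.deleteRow i := by
  ext k l
  exact h k l (by simp [k.2])

theorem deleteCol_eq_of_eq_off (h : ∀ k l, (k, l) ≠ (i, j) → M k l = M' k l) :
    M.deleteCol j = M'.deleteCol j := by
  ext k l
  exact h k l (by simp [l.2])

end EqOff

variable [Field K]

section DeleteCol

variable (M : Matrix m n K) (j : n)

theorem span_range_col_eq_span_singleton_sup :
    Submodule.span K (Set.range M.col) =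
      K ∙ M.col j ⊔ Submodule.span K (Set.range (M.deleteCol j).col) := by
  rw [← Submodule.span_insert]
  congr 1
  ext v
  constructor
  · rintro ⟨l, rfl⟩
    rcases eq_or_ne l j with rfl | hl
    · exact Set.mem_insert _ _
    · exact Set.mem_insert_of_mem _ ⟨⟨l, hl⟩, rfl⟩
  · rintro (rfl | ⟨l, rfl⟩)
    exacts [⟨j, rfl⟩, ⟨l, rfl⟩]

variable [Fintype m] [Fintype n] [DecidableEq n]

theorem rank_le_rank_deleteCol_add_one_s12 : M.rank ≤ (M.deleteCol j).rank + 1 := by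
  rw [rank_eq_finrank_span_cols, rank_eq_finrank_span_cols,
    span_range_col_eq_span_singleton_sup M j]
  refine (Submodule.finrank_add_le_finrank_add_finrank _ _).trans ?_
  have : Module.finrank K (K ∙ M.col j) ≤ 1 := by
    simpa using finrank_span_le_card (R := K) {M.col j}
  omega

theorem exists_mulVec_deleteCol_eq_col (h : M.rank ≤ (M.deleteCol j).rank) :
    ∃ e, M.deleteCol j *ᵥ e = M.col j := by
  rw [rank_eq_finrank_span_cols, rank_eq_finrank_span_cols] at h
  have hle : Submodule.span K (Set.range (M.deleteCol j).col) ≤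
      Submodule.span K (Set.range M.col) :=
    (span_range_col_eq_span_singleton_sup M j).symm ▸ le_sup_right
  have hcol : M.col j ∈ Submodule.span K (Set.range (M.deleteCol j).col) :=
    Submodule.eq_of_le_of_finrank_le hle h ▸ Submodule.subset_span ⟨j, rfl⟩
  rwa [← range_mulVecLin] at hcol

end DeleteCol

section DeleteRow

variable [Fintype m] [Fintype n] [DecidableEq m] (M : Matrix m n K) (i : m)

theorem rank_le_rank_deleteRow_add_one_s12 : M.rank ≤ (M.deleteRow i).rank + 1 := by
  have h := rank_le_rank_deleteCol_add_one_s12 Mᵀ i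
  rwa [rank_transpose, ← rank_transpose (Mᵀ.deleteCol i)] at h

theorem exists_vecMul_deleteRow_eq_row (h : M.rank ≤ (M.deleteRow i).rank) :
    ∃ c, c ᵥ* M.deleteRow i = M i := by
  rw [← rank_transpose M, ← rank_transpose (M.deleteRow i)] at h
  obtain ⟨c, hc⟩ := exists_mulVec_deleteCol_eq_col Mᵀ i h
  exact ⟨c, by rw [← mulVec_transpose]; exact hc⟩

end DeleteRow

variable [Fintype m] [Fintype n] [DecidableEq m] [DecidableEq n] {M M' : Matrix m n K} {i : m}
  {j : n}

theorem apply_eq_apply_of_eq_off_of_rank_le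
    (h : ∀ k l, (k, l) ≠ (i, j) → M k l = M' k l)
    (hM : M.rank ≤ (M.deleteCol j).rank) (hM' : M'.rank ≤ (M'.deleteRow i).rank) :
    M i j = M' i j := by
  obtain ⟨e, he⟩ := exists_mulVec_deleteCol_eq_col M j hM
  obtain ⟨c, hc⟩ := exists_vecMul_deleteRow_eq_row M' i hM'
  set C : Matrix {k // k ≠ i} {l // l ≠ j} K := M.submatrix (↑) (↑)
  have hrow : c ᵥ* C = fun l : {l // l ≠ j} => M i l := by
    have hC : C = M'.submatrix (↑) (↑) := by
      ext k l
      exact h k l (by simp [k.2])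
    funext l
    rw [hC, h i l (by simp [l.2])]
    exact congrFun hc l
  have hcol : C *ᵥ e = fun k : {k // k ≠ i} => M' k j := by
    funext k
    rw [← h k j (by simp [k.2])]
    exact congrFun he k
  calc M i j = (fun l : {l // l ≠ j} => M i l) ⬝ᵥ e := (congrFun he i).symm
    _ = c ⬝ᵥ fun k : {k // k ≠ i} => M' k j := by rw [← hrow, ← dotProduct_mulVec, hcol]
    _ = M' i j := congrFun hc j

theorem rank_le_of_eq_off (h : ∀ k l, (k, l) ≠ (i, j) → M k l = M' k l) {r : ℕ}
    (hr : (M'.deleteRow i).rank < r ∨ (M'.deleteCol j).rank < r) : M.rank ≤ r := by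
  rcases hr with hr | hr
  · have := rank_le_rank_deleteRow_add_one_s12 M i
    rw [deleteRow_eq_of_eq_off h] at this
    omega
  · have := rank_le_rank_deleteCol_add_one_s12 M j
    rw [deleteCol_eq_of_eq_off h] at this
    omega

theorem subsingleton_setOf_rank_le_of_eq_off {f : m → n → K} {r : ℕ}
    (hi : r ≤ ((of f).deleteRow i).rank) (hj : r ≤ ((of f).deleteCol j).rank) :
    {M : Matrix m n K | M.rank ≤ r ∧ ∀ k l, (k, l) ≠ (i, j) → M k l = f k l}.Subsingleton := by
  rintro M ⟨hMr, hM⟩ M' ⟨hM'r, hM'⟩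
  have hMM' : ∀ k l, (k, l) ≠ (i, j) → M k l = M' k l :=
    fun k l hkl => (hM k l hkl).trans (hM' k l hkl).symm
  ext k l
  by_cases hkl : (k, l) = (i, j)
  · obtain ⟨rfl, rfl⟩ := Prod.mk.inj hkl
    refine apply_eq_apply_of_eq_off_of_rank_le hMM' ?_ ?_
    · rw [deleteCol_eq_of_eq_off (M' := of f) hM]
      exact hMr.trans hj
    · rw [deleteRow_eq_of_eq_off (M' := of f) hM']
      exact hM'r.trans hi
  · exact hMM' k l hkl

end Matrix

theorem stmt12 {p q r : ℕ} (f : Fin p → Fin q → ℝ) (i : Fin p) (j : Fin q) :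
    ({M : Matrix (Fin p) (Fin q) ℝ | M.rank ≤ r ∧
        ∀ k l, (k, l) ≠ (i, j) → M k l = f k l}.Infinite ↔
      (((Matrix.of f).submatrix (fun k : {k : Fin p // k ≠ i} => (k : Fin p)) id).rank < r ∨
       ((Matrix.of f).submatrix id (fun l : {l : Fin q // l ≠ j} => (l : Fin q))).rank < r)) ∧
    ((((Matrix.of f).submatrix (fun k : {k : Fin p // k ≠ i} => (k : Fin p)) id).rank < r ∨
      ((Matrix.of f).submatrix id (fun l : {l : Fin q // l ≠ j} => (l : Fin q))).rank < r) →
      ∀ x : ℝ, (Matrix.of fun k l => if (k, l) = (i, j) then x else f k l).rank ≤ r) := by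
  set N : ℝ → Matrix (Fin p) (Fin q) ℝ :=
    fun x => of fun k l => if (k, l) = (i, j) then x else f k l
  have hN : ∀ x k l, (k, l) ≠ (i, j) → N x k l = of f k l := fun x k l hkl => if_neg hkl
  have hsmall : ((of f).deleteRow i).rank < r ∨ ((of f).deleteCol j).rank < r →
      ∀ x, (N x).rank ≤ r := fun h x => rank_le_of_eq_off (hN x) h
  refine ⟨⟨fun hinf => ?_, fun h => ?_⟩, hsmall⟩
  · by_contra! hlarge
    exact hinf (subsingleton_setOf_rank_le_of_eq_off hlarge.1 hlarge.2).finite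
  · refine Set.infinite_of_injective_forall_mem (fun x y hxy => ?_) fun x => ⟨hsmall h x, hN x⟩
    simpa [N] using congrFun (congrFun hxy i) j
end

section
/- Let E = ([p]×[q]) \ {(i,j)}. A partial real matrix M_E has a unique completion of rank at most r if and only if the submatrices M_{î,:}, M_{:,ĵ}, and M_{î,ĵ} all have rank exactly r; equivalently, M_{î,ĵ} contains a nonzero r×r minor and both M_{î,:} and M_{:,ĵ} have rank r. -/
/-!
Write `A(x)` for the partial matrix completed by `x` at `(i, j)`, and `R`, `C`, `B` for the
submatrices without row `i`, without column `j`, and without both. Deleting a row lowers the rank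
by at most one, and keeps it exactly when that row lies in the span of the others.

If `rank R < r`, every `A(x)` has rank at most `r`, so the completion is not unique (likewise
for `C`). If a completion of rank `r = rank R` exists, its row `i` lies in the row space of `R`;
restricting to the columns `≠ j` puts row `i` of `C` in the row space of `B`, so
`rank B = rank C`.

Conversely, if all three ranks are `r`, row `i` of `C` is `d ᵥ* B`, and `A(x)` with
`x = (d ᵥ* R) j` has rank `r`. Column `j` of `R` is `B *ᵥ e`, so every vector `v` in the row
space of `R` satisfies `v j = (v restricted to the columns ≠ j) ⬝ᵥ e`. This fixes `x` for
every completion of rank at most `r`.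
-/

open Function Matrix Set Submodule

namespace Matrix

variable {α : Type*} {m n : Type*}

def dropRow (A : Matrix m n α) (i : m) : Matrix {k // k ≠ i} n α :=
  A.submatrix (↑) id

def dropCol (A : Matrix m n α) (j : n) : Matrix m {l // l ≠ j} α :=
  A.submatrix id (↑)

def updateEntry [DecidableEq m] [DecidableEq n] (A : Matrix m n α) (i : m) (j : n) (x : α) :
    Matrix m n α :=
  of fun k l => if k = i ∧ l = j then x else A k l

theorem transpose_dropCol (A : Matrix m n α) (j : n) : (A.dropCol j)ᵀ = Aᵀ.dropRow j :=
  rfl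

theorem dropCol_dropRow_comm (A : Matrix m n α) (i : m) (j : n) :
    (A.dropRow i).dropCol j = (A.dropCol j).dropRow i :=
  rfl

section UpdateEntry

variable [DecidableEq m] [DecidableEq n] (A : Matrix m n α) (i : m) (j : n)

theorem updateEntry_apply_self (x : α) : A.updateEntry i j x i j = x := by
  simp [updateEntry]

theorem updateEntry_apply_of_ne (x : α) {k : m} {l : n} (h : (k, l) ≠ (i, j)) :
    A.updateEntry i j x k l = A k l := by
  simp_all [updateEntry]

theorem eq_updateEntry_of_forall_ne {M : Matrix m n α}
    (hM : ∀ k l, (k, l) ≠ (i, j) → M k l = A k l) : M = A.updateEntry i j (M i j) := by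
  ext k l
  by_cases h : (k, l) = (i, j)
  · simp_all [updateEntry]
  · rw [hM k l h, updateEntry_apply_of_ne A i j _ h]

theorem dropRow_updateEntry (x : α) : (A.updateEntry i j x).dropRow i = A.dropRow i := by
  ext k l
  exact updateEntry_apply_of_ne A i j x fun h => k.2 (congrArg Prod.fst h)

theorem transpose_updateEntry (x : α) : (A.updateEntry i j x)ᵀ = Aᵀ.updateEntry j i x := by
  ext l k
  simp [updateEntry, and_comm]

theorem existsUnique_forall_ne_iff (P : Matrix m n α → Prop) :
    (∃! M, P M ∧ ∀ k l, (k, l) ≠ (i, j) → M k l = A k l) ↔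
      ∃! x, P (A.updateEntry i j x) := by
  constructor
  · rintro ⟨M, ⟨hP, hM⟩, huniq⟩
    have hM' := eq_updateEntry_of_forall_ne A i j hM
    refine ⟨M i j, by beta_reduce; rwa [← hM'], fun x hx => ?_⟩
    rw [← huniq _ ⟨hx, fun k l => updateEntry_apply_of_ne A i j x⟩, updateEntry_apply_self]
  · rintro ⟨x, hx, huniq⟩
    refine ⟨A.updateEntry i j x, ⟨hx, fun k l => updateEntry_apply_of_ne A i j x⟩, ?_⟩
    rintro M ⟨hP, hM⟩
    rw [eq_updateEntry_of_forall_ne A i j hM] at hP ⊢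
    rw [huniq _ hP]

end UpdateEntry

theorem span_row_eq_span_row_dropRow_sup {R : Type*} [Semiring R] (A : Matrix m n R) (i : m) :
    span R (range A.row) = span R (range (A.dropRow i).row) ⊔ R ∙ A i := by
  have : range A.row = insert (A i) (range (A.dropRow i).row) := by
    ext v
    simp only [mem_range, mem_insert_iff, Subtype.exists]
    constructor
    · rintro ⟨k, rfl⟩
      by_cases hk : k = i
      · exact Or.inl (hk ▸ rfl)
      · exact Or.inr ⟨k, hk, rfl⟩
    · rintro (rfl | ⟨k, -, rfl⟩)
      exacts [⟨i, rfl⟩, ⟨k, rfl⟩]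
  rw [this, span_insert, sup_comm]

theorem comp_mem_span_row_submatrix {R : Type*} [Semiring R] {o : Type*} [Fintype m]
    (A : Matrix m n R) (g : o → n) {v : n → R} (hv : v ∈ span R (range A.row)) :
    v ∘ g ∈ span R (range (A.submatrix id g).row) := by
  obtain ⟨c, rfl⟩ := (mem_span_range_iff_exists_fun R).1 hv
  exact (mem_span_range_iff_exists_fun R).2 ⟨c, by ext; simp [Finset.sum_apply]⟩

theorem apply_eq_dotProduct_of_mem_span_row {R : Type*} [Semiring R] [Fintype n]
    [DecidableEq n] (A : Matrix m n R) {j : n} {e : {l // l ≠ j} → R}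
    (he : A.dropCol j *ᵥ e = A.col j) {v : n → R} (hv : v ∈ span R (range A.row)) :
    v j = (fun l : {l // l ≠ j} => v l) ⬝ᵥ e := by
  induction hv using span_induction with
  | mem _ h =>
    obtain ⟨k, rfl⟩ := h
    exact (congrFun he k).symm
  | zero => simp
  | add x y _ _ hx hy => rw [Pi.add_apply, hx, hy, ← add_dotProduct]; rfl
  | smul a x _ hx => rw [Pi.smul_apply, hx, ← smul_dotProduct]; rfl

section Field

variable {K : Type*} [Field K] [Fintype m] [Fintype n]

theorem rank_dropRow_eq_iff (A : Matrix m n K) (i : m) :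
    (A.dropRow i).rank = A.rank ↔ A i ∈ span K (range (A.dropRow i).row) := by
  rw [rank_eq_finrank_span_row, rank_eq_finrank_span_row A, span_row_eq_span_row_dropRow_sup A i]
  constructor
  · intro h
    by_contra hi
    rw [finrank_sup_span_singleton hi] at h
    omega
  · intro hi
    rw [sup_eq_left.2 ((span_singleton_le_iff_mem _ _).2 hi)]

theorem rank_le_rank_dropRow_add_one (A : Matrix m n K) (i : m) :
    A.rank ≤ (A.dropRow i).rank + 1 := by
  by_cases hi : A i ∈ span K (range (A.dropRow i).row)
  · exact ((rank_dropRow_eq_iff A i).2 hi).ge.trans (Nat.le_succ _)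
  · rw [rank_eq_finrank_span_row A, rank_eq_finrank_span_row (A.dropRow i),
      span_row_eq_span_row_dropRow_sup A i, finrank_sup_span_singleton hi]

theorem rank_dropCol_eq_iff [DecidableEq n] (A : Matrix m n K) (j : n) :
    (A.dropCol j).rank = A.rank ↔ A.col j ∈ span K (range (A.dropCol j).col) := by
  rw [← rank_transpose A, ← rank_transpose (A.dropCol j)]
  exact rank_dropRow_eq_iff Aᵀ j

theorem exists_injective_linearIndependent_row_of_le_rank (A : Matrix m n K) {s : ℕ}
    (h : s ≤ A.rank) :
    ∃ e : Fin s → m, Injective e ∧ LinearIndependent K (A.submatrix e id).row := by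
  classical
  obtain ⟨κ, a, ha, hspan, hli⟩ := exists_linearIndependent' K A.row
  have : Fintype κ := Fintype.ofInjective a ha
  have hcard : Fintype.card κ = A.rank := by
    rw [rank_eq_finrank_span_row, ← hspan]
    exact linearIndependent_iff_card_eq_finrank_span.1 hli
  obtain ⟨φ⟩ : Nonempty (Fin s ↪ κ) := Embedding.nonempty_of_card_le (by simpa [hcard])
  exact ⟨a ∘ φ, ha.comp φ.injective, hli.comp φ φ.injective⟩

theorem le_rank_iff_exists_submatrix_det_ne_zero (A : Matrix m n K) (s : ℕ) :
    s ≤ A.rank ↔ ∃ (e : Fin s → m) (g : Fin s → n),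
      Injective e ∧ Injective g ∧ (A.submatrix e g).det ≠ 0 := by
  constructor
  · intro h
    obtain ⟨e, he, hli⟩ := exists_injective_linearIndependent_row_of_le_rank A h
    obtain ⟨g, hg, hlig⟩ :=
      exists_injective_linearIndependent_row_of_le_rank (A.submatrix e id)ᵀ
        (by rw [rank_transpose, hli.rank_matrix, Fintype.card_fin])
    refine ⟨e, g, he, hg, ?_⟩
    rw [← det_transpose]
    exact ((isUnit_iff_isUnit_det _).1 (linearIndependent_rows_iff_isUnit.1 hlig)).ne_zero
  · rintro ⟨e, g, -, -, hdet⟩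
    calc s = (A.submatrix e g).rank := by rw [rank_of_det_ne_zero hdet, Fintype.card_fin]
      _ ≤ A.rank := rank_submatrix_le A e g

variable [DecidableEq m] [DecidableEq n] (A : Matrix m n K) (i : m) (j : n)

theorem exists_rank_updateEntry_eq (h : ((A.dropCol j).dropRow i).rank = (A.dropCol j).rank) :
    ∃ x, (A.updateEntry i j x).rank = (A.dropRow i).rank := by
  obtain ⟨d, hd⟩ : ∃ d, d ᵥ* (A.dropCol j).dropRow i = A.dropCol j i := by
    simpa only [← range_vecMulLinear, LinearMap.mem_range, vecMulLinear_apply] using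
      (rank_dropRow_eq_iff _ i).1 h
  set x := (d ᵥ* A.dropRow i) j
  have hrow : A.updateEntry i j x i = d ᵥ* A.dropRow i := by
    funext l
    by_cases hl : l = j
    · subst hl
      exact updateEntry_apply_self A i l _
    · rw [updateEntry_apply_of_ne A i j _ fun h => hl (congrArg Prod.snd h)]
      exact (congrFun hd ⟨l, hl⟩).symm
  have hmem : A.updateEntry i j x i ∈ span K (range ((A.updateEntry i j x).dropRow i).row) := by
    rw [dropRow_updateEntry, hrow, ← range_vecMulLinear]
    exact ⟨d, rfl⟩
  exact ⟨x, by rw [← (rank_dropRow_eq_iff _ i).2 hmem, dropRow_updateEntry]⟩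

theorem eq_of_rank_updateEntry_le (h : ((A.dropRow i).dropCol j).rank = (A.dropRow i).rank)
    {x y : K} (hx : (A.updateEntry i j x).rank ≤ (A.dropRow i).rank)
    (hy : (A.updateEntry i j y).rank ≤ (A.dropRow i).rank) : x = y := by
  obtain ⟨e, he⟩ : ∃ e, (A.dropRow i).dropCol j *ᵥ e = (A.dropRow i).col j := by
    simpa only [← range_mulVecLin, LinearMap.mem_range, mulVecLin_apply] using
      (rank_dropCol_eq_iff _ j).1 h
  have key : ∀ x, (A.updateEntry i j x).rank ≤ (A.dropRow i).rank →
      x = (fun l : {l // l ≠ j} => A i l) ⬝ᵥ e := by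
    intro x hx
    have hmem : A.updateEntry i j x i ∈ span K (range (A.dropRow i).row) := by
      rw [← dropRow_updateEntry A i j x, ← rank_dropRow_eq_iff]
      exact le_antisymm (rank_submatrix_le _ _ _) (by rwa [dropRow_updateEntry])
    rw [← updateEntry_apply_self A i j x, apply_eq_dotProduct_of_mem_span_row _ he hmem]
    congr
    funext l
    exact updateEntry_apply_of_ne A i j x fun h => l.2 (congrArg Prod.snd h)
  rw [key x hx, key y hy]

variable {A i j} {r : ℕ}

theorem rank_dropRow_eq_of_existsUnique (h : ∃! x, (A.updateEntry i j x).rank ≤ r) :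
    (A.dropRow i).rank = r := by
  obtain ⟨x, hx⟩ := h.exists
  refine le_antisymm ?_ ?_
  · rw [← dropRow_updateEntry A i j x]
    exact (rank_submatrix_le _ _ _).trans hx
  · by_contra! hlt
    have hall : ∀ y, (A.updateEntry i j y).rank ≤ r := fun y =>
      (rank_le_rank_dropRow_add_one _ i).trans (by rw [dropRow_updateEntry]; omega)
    exact zero_ne_one (h.unique (hall 0) (hall 1))

theorem rank_dropCol_eq_of_existsUnique (h : ∃! x, (A.updateEntry i j x).rank ≤ r) :
    (A.dropCol j).rank = r := by
  rw [← rank_transpose, transpose_dropCol]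
  refine rank_dropRow_eq_of_existsUnique (A := Aᵀ) (i := j) (j := i) ?_
  simpa only [← transpose_updateEntry, rank_transpose] using h

theorem rank_dropCol_dropRow_eq_of_existsUnique (h : ∃! x, (A.updateEntry i j x).rank ≤ r) :
    ((A.dropRow i).dropCol j).rank = r := by
  have hR := rank_dropRow_eq_of_existsUnique h
  obtain ⟨x, hx⟩ := h.exists
  have hmem : A.updateEntry i j x i ∈ span K (range ((A.updateEntry i j x).dropRow i).row) := by
    rw [← rank_dropRow_eq_iff]
    exact le_antisymm (rank_submatrix_le _ _ _) (by rwa [dropRow_updateEntry, hR])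
  have hrow : A.updateEntry i j x i ∘ (↑) = A.dropCol j i := by
    funext l
    exact updateEntry_apply_of_ne A i j x fun h => l.2 (congrArg Prod.snd h)
  have hrestrict : A.dropCol j i ∈ span K (range ((A.dropCol j).dropRow i).row) := by
    have := comp_mem_span_row_submatrix _ ((↑) : {l // l ≠ j} → n) hmem
    rw [hrow, dropRow_updateEntry] at this
    exact this
  rw [dropCol_dropRow_comm, (rank_dropRow_eq_iff _ i).2 hrestrict]
  exact rank_dropCol_eq_of_existsUnique h

theorem existsUnique_rank_updateEntry_le_iff :
    (∃! x, (A.updateEntry i j x).rank ≤ r) ↔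
      (A.dropRow i).rank = r ∧ (A.dropCol j).rank = r ∧ ((A.dropRow i).dropCol j).rank = r := by
  refine ⟨fun h => ⟨rank_dropRow_eq_of_existsUnique h, rank_dropCol_eq_of_existsUnique h,
    rank_dropCol_dropRow_eq_of_existsUnique h⟩, ?_⟩
  rintro ⟨hR, hC, hB⟩
  obtain ⟨x, hx⟩ := exists_rank_updateEntry_eq A i j (hB.trans hC.symm)
  refine ⟨x, hx.trans hR |>.le, fun y hy => ?_⟩
  exact eq_of_rank_updateEntry_le A i j (hB.trans hR.symm) (hR ▸ hy) hx.le

end Field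

end Matrix

theorem stmt13 {p q r : ℕ} (f : Fin p → Fin q → ℝ) (i : Fin p) (j : Fin q) :
    ((∃! M : Matrix (Fin p) (Fin q) ℝ, M.rank ≤ r ∧
        ∀ k l, (k, l) ≠ (i, j) → M k l = f k l) ↔
      (((Matrix.of f).submatrix (fun k : {k : Fin p // k ≠ i} => (k : Fin p)) id).rank = r ∧
       ((Matrix.of f).submatrix id (fun l : {l : Fin q // l ≠ j} => (l : Fin q))).rank = r ∧
       ((Matrix.of f).submatrix (fun k : {k : Fin p // k ≠ i} => (k : Fin p))
          (fun l : {l : Fin q // l ≠ j} => (l : Fin q))).rank = r)) ∧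
    ((((Matrix.of f).submatrix (fun k : {k : Fin p // k ≠ i} => (k : Fin p)) id).rank = r ∧
      ((Matrix.of f).submatrix id (fun l : {l : Fin q // l ≠ j} => (l : Fin q))).rank = r ∧
      ((Matrix.of f).submatrix (fun k : {k : Fin p // k ≠ i} => (k : Fin p))
         (fun l : {l : Fin q // l ≠ j} => (l : Fin q))).rank = r) ↔
     (((Matrix.of f).submatrix (fun k : {k : Fin p // k ≠ i} => (k : Fin p)) id).rank = r ∧
      ((Matrix.of f).submatrix id (fun l : {l : Fin q // l ≠ j} => (l : Fin q))).rank = r ∧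
      ∃ (ρ : Fin r → {k : Fin p // k ≠ i}) (σ : Fin r → {l : Fin q // l ≠ j}),
        Function.Injective ρ ∧ Function.Injective σ ∧
        (((Matrix.of f).submatrix (fun k : {k : Fin p // k ≠ i} => (k : Fin p))
            (fun l : {l : Fin q // l ≠ j} => (l : Fin q))).submatrix ρ σ).det ≠ 0)) := by
  refine ⟨(existsUnique_forall_ne_iff _ i j _).trans existsUnique_rank_updateEntry_le_iff, ?_⟩
  · refine and_congr_right fun hR => and_congr_right fun _ => ?_
    rw [← le_rank_iff_exists_submatrix_det_ne_zero]
    have hB : (((of f).dropRow i).dropCol j).rank ≤ r :=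
      (rank_submatrix_le _ _ _).trans hR.le
    exact ⟨ge_of_eq, hB.antisymm⟩
end

section
/- If a partial matrix M_E ∈ ℂ^E has a completion of rank at most r, then M_E is r×r minors zero-consistent: for every r-element row set I and r-element column set K contained in the observed pattern, if the observed submatrix M_{I,K} has rank at most r−1, then the submatrix M_{I,:} or the submatrix M_{:,K} has rank at most r−1. -/
open Matrix

-- R1: row submatrix mulVecLin as composition
lemma sub_row_mulVecLin {m n l : Type*} [Fintype m] [Fintype n] [Fintype l]
    (A : Matrix m n ℂ) (e : l → m) :
    (A.submatrix e id).mulVecLin = (LinearMap.funLeft ℂ ℂ e).comp A.mulVecLin := by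
  ext v i
  simp [Matrix.mulVecLin_apply, Matrix.mulVec, dotProduct, LinearMap.funLeft]

lemma col_range_le {m : Type*} [Fintype m] {q : ℕ}
    (A : Matrix m (Fin q) ℂ) (K : Finset (Fin q)) :
    LinearMap.range (A.submatrix id (fun b : {x // x ∈ K} => (b : Fin q))).mulVecLin ≤
      LinearMap.range A.mulVecLin := by
  rintro x ⟨w, rfl⟩
  refine ⟨fun j => if h : j ∈ K then w ⟨j, h⟩ else 0, ?_⟩
  funext i
  simp only [Matrix.mulVecLin_apply, Matrix.mulVec, dotProduct, Matrix.submatrix_apply,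
    id_eq]
  calc ∑ j : Fin q, A i j * (if h : j ∈ K then w ⟨j, h⟩ else 0)
      = ∑ j ∈ K, A i j * (if h : j ∈ K then w ⟨j, h⟩ else 0) :=
        (Finset.sum_subset K.subset_univ (fun x _ hx => by simp [hx])).symm
    _ = ∑ b ∈ K.attach, A i (b : Fin q) * (if h : (b : Fin q) ∈ K then w ⟨b, h⟩ else 0) :=
        (Finset.sum_attach _ _).symm
    _ = ∑ b : {x // x ∈ K}, A i (b : Fin q) * w b := by
        rw [Finset.univ_eq_attach]
        exact Finset.sum_congr rfl fun b _ => by simp [b.2]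

theorem stmt15 {p q r : ℕ} (E : Set (Fin p × Fin q)) (f : Fin p → Fin q → ℂ)
    (hcomp : ∃ M : Matrix (Fin p) (Fin q) ℂ, M.rank ≤ r ∧
      ∀ e ∈ E, M e.1 e.2 = f e.1 e.2)
    (I : Finset (Fin p)) (K : Finset (Fin q))
    (hIcard : I.card = r) (hKcard : K.card = r)
    (hIobs : ∀ a ∈ I, ∀ b : Fin q, (a, b) ∈ E)
    (hKobs : ∀ b ∈ K, ∀ a : Fin p, (a, b) ∈ E)
    (hIK : ((Matrix.of f).submatrix (fun a : {x // x ∈ I} => (a : Fin p))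
        (fun b : {x // x ∈ K} => (b : Fin q))).rank < r) :
    ((Matrix.of f).submatrix (fun a : {x // x ∈ I} => (a : Fin p)) id).rank < r ∨
    ((Matrix.of f).submatrix id (fun b : {x // x ∈ K} => (b : Fin q))).rank < r := by
  obtain ⟨M, hMr, hME⟩ := hcomp
  set eI : {x // x ∈ I} → Fin p := fun a => (a : Fin p)
  set eK : {x // x ∈ K} → Fin q := fun b => (b : Fin q)
  have h1 : (Matrix.of f).submatrix eI id = M.submatrix eI id := by
    ext a b; exact (hME (eI a, b) (hIobs _ a.2 b)).symm
  have h2 : (Matrix.of f).submatrix id eK = M.submatrix id eK := by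
    ext a b; exact (hME (a, eK b) (hKobs _ b.2 a)).symm
  have h3 : (Matrix.of f).submatrix eI eK = M.submatrix eI eK := by
    ext a b; exact (hME (eI a, eK b) (hIobs _ a.2 _)).symm
  rw [h3] at hIK
  rw [h1, h2]
  by_contra h
  push_neg at h
  obtain ⟨hI, hK⟩ := h
  -- column space considerations
  set C := LinearMap.range M.mulVecLin with hC
  set CK := LinearMap.range (M.submatrix id eK).mulVecLin with hCK
  have hle : CK ≤ C := col_range_le M K
  have hfinC : Module.finrank ℂ C = M.rank := rfl
  have hfinCK : Module.finrank ℂ CK = (M.submatrix id eK).rank := rfl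
  have hCeq : CK = C := by
    refine Submodule.eq_of_le_of_finrank_le hle ?_
    rw [hfinC, hfinCK]
    exact hMr.trans hK
  set π := LinearMap.funLeft ℂ ℂ eI
  have hr1 : (M.submatrix eI id).rank = Module.finrank ℂ (C.map π) := by
    rw [Matrix.rank, sub_row_mulVecLin, LinearMap.range_comp, hC]
  have hr2 : (M.submatrix eI eK).rank = Module.finrank ℂ (CK.map π) := by
    have : M.submatrix eI eK = (M.submatrix id eK).submatrix eI id := by
      rw [Matrix.submatrix_submatrix]; rfl
    rw [this, Matrix.rank, sub_row_mulVecLin, LinearMap.range_comp, hCK]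
  have : (M.submatrix eI id).rank = (M.submatrix eI eK).rank := by
    rw [hr1, hr2, hCeq]
  omega
end

section
/- Let M ∈ ℝ_{≥0}^{p×q} with a factorization M = A B where A ∈ ℝ^{p×r}, B ∈ ℝ^{r×q}, and define the cones P̂ = cone(columns of B) ⊆ ℝ^r and Q̂ = {x ∈ ℝ^r : A x ≥ 0}. Then P̂ ⊆ Q̂, and M admits a factorization M = A' B' with A' ∈ ℝ_{≥0}^{p×r}, B' ∈ ℝ_{≥0}^{r×q} if and only if there exists an invertible matrix C ∈ ℝ^{r×r} with A C ≥ 0 and C^{−1} B ≥ 0 (equivalently, a simplicial cone Δ̂ = cone(columns of C) with P̂ ⊆ Δ̂ ⊆ Q̂), provided rank(M) = r so that every size-r factorization of M is of the form (AC, C^{−1}B). -/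
/-!
Every conic combination of the columns of `B` is mapped by `A` to `M c ≥ 0`, so `P̂ ⊆ Q̂`.
For the equivalence, `rank (A B) = r` forces `A` to have a left inverse `L` and `B` a right
inverse `R`. If `A B = A' B'`, then `C = L A'` and `D = B' R` satisfy `C D = L (A' B') R = 1`,
`A C = A'` and `D B = B'`, so every factorization of size `r` is `(A C, C⁻¹ B)`.
-/

open Matrix

namespace Matrix

variable {K m n r : Type*} [Field K] [Fintype n] [Fintype r]

theorem rank_eq_card_width_of_rank_mul {A : Matrix m r K} {B : Matrix r n K}
    (h : (A * B).rank = Fintype.card r) : A.rank = Fintype.card r :=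
  le_antisymm A.rank_le_card_width (h ▸ rank_mul_le_left A B)

theorem rank_eq_card_height_of_rank_mul {A : Matrix m r K} {B : Matrix r n K}
    (h : (A * B).rank = Fintype.card r) : B.rank = Fintype.card r :=
  le_antisymm B.rank_le_card_height (h ▸ rank_mul_le_right A B)

variable [Fintype m] [DecidableEq r]

theorem exists_mul_eq_one_of_rank_eq_card_width {A : Matrix m r K}
    (h : A.rank = Fintype.card r) : ∃ L : Matrix r m K, L * A = 1 := by
  classical
  have hker : LinearMap.ker A.mulVecLin = ⊥ := by
    rw [← Submodule.finrank_eq_zero]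
    have := A.mulVecLin.finrank_range_add_finrank_ker
    rw [← rank, h, Module.finrank_fintype_fun_eq_card] at this
    omega
  obtain ⟨g, hg⟩ := A.mulVecLin.exists_leftInverse_of_injective hker
  refine ⟨LinearMap.toMatrix' g, ?_⟩
  rw [← LinearMap.toMatrix'_toLin' A, ← LinearMap.toMatrix'_comp, Matrix.toLin'_apply', hg,
    LinearMap.toMatrix'_id]

theorem exists_mul_eq_one_of_rank_eq_card_height {B : Matrix r n K}
    (h : B.rank = Fintype.card r) : ∃ R : Matrix n r K, B * R = 1 := by
  obtain ⟨L, hL⟩ := exists_mul_eq_one_of_rank_eq_card_width (A := Bᵀ) (by rwa [rank_transpose])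
  exact ⟨Lᵀ, by rw [← transpose_transpose (B * Lᵀ), transpose_mul, transpose_transpose, hL,
    transpose_one]⟩

theorem exists_isUnit_det_of_mul_eq_mul {A A' : Matrix m r K} {B B' : Matrix r n K}
    (hrank : (A * B).rank = Fintype.card r) (h : A * B = A' * B') :
    ∃ C : Matrix r r K, IsUnit C.det ∧ A * C = A' ∧ C⁻¹ * B = B' := by
  obtain ⟨L, hL⟩ := exists_mul_eq_one_of_rank_eq_card_width
    (rank_eq_card_width_of_rank_mul hrank)
  obtain ⟨R, hR⟩ := exists_mul_eq_one_of_rank_eq_card_height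
    (rank_eq_card_height_of_rank_mul hrank)
  have hCD : L * A' * (B' * R) = 1 := by
    rw [Matrix.mul_assoc, ← Matrix.mul_assoc A', ← h, Matrix.mul_assoc, ← Matrix.mul_assoc,
      hL, hR, Matrix.one_mul]
  have hDC : B' * R * (L * A') = 1 := mul_eq_one_comm.mp hCD
  have hinv : (L * A')⁻¹ = B' * R := inv_eq_right_inv hCD
  refine ⟨L * A', isUnit_det_of_right_inverse hCD, ?_, ?_⟩
  · calc A * (L * A') = A * B * R * (L * A') := by rw [Matrix.mul_assoc A, hR, Matrix.mul_one]
      _ = A' * (B' * R * (L * A')) := by rw [h, Matrix.mul_assoc A', Matrix.mul_assoc A']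
      _ = A' := by rw [hDC, Matrix.mul_one]
  · calc (L * A')⁻¹ * B = B' * R * (L * (A * B)) := by
          rw [hinv, ← Matrix.mul_assoc L, hL, Matrix.one_mul]
      _ = B' * R * (L * A') * B' := by simp only [h, Matrix.mul_assoc]
      _ = B' := by rw [hDC, Matrix.one_mul]

end Matrix

theorem stmt16 {p q r : ℕ} (M : Matrix (Fin p) (Fin q) ℝ)
    (A : Matrix (Fin p) (Fin r) ℝ) (B : Matrix (Fin r) (Fin q) ℝ)
    (hM : ∀ i j, 0 ≤ M i j) (hfac : M = A * B) (hrank : M.rank = r) :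
    (∀ c : Fin q → ℝ, (∀ j, 0 ≤ c j) → ∀ i, 0 ≤ A.mulVec (B.mulVec c) i) ∧
    ((∃ (A' : Matrix (Fin p) (Fin r) ℝ) (B' : Matrix (Fin r) (Fin q) ℝ),
        (∀ i t, 0 ≤ A' i t) ∧ (∀ t j, 0 ≤ B' t j) ∧ M = A' * B') ↔
      ∃ C : Matrix (Fin r) (Fin r) ℝ, IsUnit C.det ∧
        (∀ i t, 0 ≤ (A * C) i t) ∧ (∀ t j, 0 ≤ (C⁻¹ * B) t j)) := by
  refine ⟨fun c hc i => ?_, ⟨?_, ?_⟩⟩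
  · rw [mulVec_mulVec, ← hfac, mulVec, dotProduct]
    exact Finset.sum_nonneg fun j _ => mul_nonneg (hM i j) (hc j)
  · rintro ⟨A', B', hA', hB', hfac'⟩
    obtain ⟨C, hC, hAC, hCB⟩ := exists_isUnit_det_of_mul_eq_mul
      (by rw [← hfac, hrank, Fintype.card_fin]) (hfac.symm.trans hfac')
    exact ⟨C, hC, hAC ▸ hA', hCB ▸ hB'⟩
  · rintro ⟨C, hC, hAC, hCB⟩
    refine ⟨A * C, C⁻¹ * B, hAC, hCB, ?_⟩
    rw [hfac, Matrix.mul_assoc, ← Matrix.mul_assoc C, mul_nonsing_inv _ hC, Matrix.one_mul]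
end
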